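/- Let D be a variable-wise variable inclusion-like domination rule whose strict domination pairs never have an empty span as right-hand side and whose hitting set number is at most k ∈ ℕ. Let A be a sequential variable-set automaton with state set Q defining the spanner P_A. Then for every document d: |P_A(d)| ≤ |Q|^k · |(η_D P_A)(d)|, where (η_D P_A)(d) is the set of mappings of P_A(d) that are maximal under the domination relation of D on d. -/

import Mathlib

namespace DocSpanners

/-- A span: a pair of endpoint positions `[i, j⟩`. -/
abbrev Span : Type := ℕ × ℕ

/-- `s` is a span of document `d`. -/
def IsSpanOf {α : Type} (d : List α) (s : Span) : Prop :=
  s.1 ≤ s.2 ∧ s.2 ≤ d.length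

/-- A (schemaless) mapping over variable type `V`: a partial assignment of spans. -/
abbrev Mapping (V : Type) : Type := V → Option Span

/-- `m` is a mapping of document `d`. -/
def MappingOf {α V : Type} (d : List α) (m : Mapping V) : Prop :=
  ∀ x s, m x = some s → IsSpanOf d s

/-- A spanner: maps documents to sets of mappings. -/
abbrev Spanner (α V : Type) : Type := List α → Set (Mapping V)

/-- Labels of a variable-set automaton: letters and variable markers. -/
inductive Label (α V : Type) : Type where
  | letter (a : α)
  | vopen (x : V)
  | vclose (x : V)
deriving DecidableEq

/-- The sequence of letters of a ref-word. -/
def letters {α V : Type} (w : List (Label α V)) : List α :=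
  w.filterMap fun l => match l with
    | Label.letter a => some a
    | _ => none

/-- A ref-word is valid if for each variable, either its markers do not appear, or
the opening and closing markers appear exactly once with the opening first. -/
def ValidRef {α V : Type} [DecidableEq α] [DecidableEq V] (w : List (Label α V)) : Prop :=
  ∀ x : V,
    (Label.vopen x ∉ w ∧ Label.vclose x ∉ w) ∨
    (w.count (Label.vopen x) = 1 ∧ w.count (Label.vclose x) = 1 ∧
      w.idxOf (Label.vopen x) < w.idxOf (Label.vclose x))

/-- The mapping defined by a (valid) ref-word: each marked variable is sent to the
span delimited by the positions at which its markers are read. -/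
def refMapping {α V : Type} [DecidableEq α] [DecidableEq V] (w : List (Label α V)) :
    Mapping V := fun x =>
  if Label.vopen x ∈ w then
    some ((letters (w.take (w.idxOf (Label.vopen x)))).length,
          (letters (w.take (w.idxOf (Label.vclose x)))).length)
  else none

/-- A variable-set automaton with state type `Q`. -/
structure VA (α V Q : Type) : Type where
  init : Q
  final : Set Q
  trans : Q → Label α V → Q → Prop

/-- Paths in a VA. -/
inductive VA.Path {α V Q : Type} (A : VA α V Q) : Q → List (Label α V) → Q → Prop where
  | nil (q : Q) : VA.Path A q [] q
  | cons {q q' q'' : Q} {l : Label α V} {w : List (Label α V)} :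
      A.trans q l q' → VA.Path A q' w q'' → VA.Path A q (l :: w) q''

/-- The VA accepts the ref-word `w` (an accepting run reads `w`). -/
def VA.AcceptsRef {α V Q : Type} (A : VA α V Q) (w : List (Label α V)) : Prop :=
  ∃ qf ∈ A.final, A.Path A.init w qf

/-- A VA is sequential if every accepting run is valid. -/
def VA.Sequential {α V Q : Type} [DecidableEq α] [DecidableEq V] (A : VA α V Q) : Prop :=
  ∀ w, A.AcceptsRef w → ValidRef w

/-- The spanner defined by a (sequential) VA. -/
def VA.spanner {α V Q : Type} [DecidableEq α] [DecidableEq V] (A : VA α V Q) :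
    Spanner α V := fun d =>
  {m | ∃ w, A.AcceptsRef w ∧ letters w = d ∧ refMapping w = m}

/-- A spanner is regular if it is defined by some sequential VA with finitely many states. -/
def IsRegular {α V : Type} [DecidableEq α] [DecidableEq V] (P : Spanner α V) : Prop :=
  ∃ (Q : Type) (_ : Fintype Q) (A : VA α V Q), A.Sequential ∧ A.spanner = P

/-- The skyline operator: keep only the mappings of `P d` that are maximal under `R d`. -/
def skyline {α V : Type} (P : Spanner α V)
    (R : List α → Mapping V → Mapping V → Prop) : Spanner α V := fun d =>
  {m | m ∈ P d ∧ ∀ m' ∈ P d, m' ≠ m → ¬ R d m m'}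

/-- The variable inclusion domination relation: `m2` extends `m1`. -/
def varIncRel {V : Type} (m1 m2 : Mapping V) : Prop :=
  ∀ x s, m1 x = some s → m2 x = some s

/-- Two mappings have the same domain. -/
def sameDom {V : Type} (m1 m2 : Mapping V) : Prop :=
  ∀ x, m1 x = none ↔ m2 x = none

/-- The span inclusion domination relation. -/
def spanIncRel {V : Type} (m1 m2 : Mapping V) : Prop :=
  sameDom m1 m2 ∧
    ∀ x s1 s2, m1 x = some s1 → m2 x = some s2 → s2.1 ≤ s1.1 ∧ s1.2 ≤ s2.2

/-- The left-to-right domination relation: same start, `m2` no shorter. -/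
def ltrRel {V : Type} (m1 m2 : Mapping V) : Prop :=
  sameDom m1 m2 ∧
    ∀ x s1 s2, m1 x = some s1 → m2 x = some s2 →
      s1.1 = s2.1 ∧ s1.2 - s1.1 ≤ s2.2 - s2.1

/-- The span length domination relation: `m2`'s spans are no shorter. -/
def spanLenRel {V : Type} (m1 m2 : Mapping V) : Prop :=
  sameDom m1 m2 ∧
    ∀ x s1 s2, m1 x = some s1 → m2 x = some s2 → s1.2 - s1.1 ≤ s2.2 - s2.1

/-! Send an output mapping `m` to a skyline mapping `m'` dominating it, together with the states
that accepting runs producing `m` are in just before reading the letters at the positions of a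
hitting set `H`; there are at most `|Q|^k` such tuples of states. This map is injective. Since `D`
is variable inclusion-like, two outputs dominated by the same `m'` can only differ on a variable
`x` that one of them leaves undefined while the other sends it to `m'(x)`, the right-hand side of
a strict domination pair, so some `i ∈ H` lies inside this span. Splicing the run of the first
mapping before position `i`, where `x` is open but not yet closed, onto the run of the second
after position `i` gives an accepting run that opens `x` and never closes it, contradicting
sequentiality. -/

namespace VA

variable {α V Q : Type} {A : VA α V Q}

theorem Path.append {q q' q'' : Q} {u v : List (Label α V)}
    (hu : A.Path q u q') (hv : A.Path q' v q'') : A.Path q (u ++ v) q'' := by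
  induction hu with
  | nil => exact hv
  | cons ht _ ih => exact .cons ht (ih hv)

theorem Path.exists_of_append {q q'' : Q} :
    ∀ {u v : List (Label α V)}, A.Path q (u ++ v) q'' → ∃ q', A.Path q u q' ∧ A.Path q' v q''
  | [], _, h => ⟨q, .nil q, h⟩
  | _ :: _, _, .cons ht h =>
    let ⟨q', hu, hv⟩ := exists_of_append h
    ⟨q', .cons ht hu, hv⟩

end VA

section Letters

variable {α V : Type}

theorem length_letters_take_le (w : List (Label α V)) (n : ℕ) :
    (letters (w.take n)).length ≤ (letters w).length :=
  ((List.take_sublist n w).filterMap _).length_le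

theorem exists_eq_append_letter_cons :
    ∀ {w : List (Label α V)} {i : ℕ}, i < (letters w).length →
      ∃ u a v, w = u ++ Label.letter a :: v ∧ (letters u).length = i
  | [], _, h => by simp [letters] at h
  | Label.letter a :: w, 0, _ => ⟨[], a, w, rfl, rfl⟩
  | Label.letter b :: w, i + 1, h => by
    obtain ⟨u, a, v, rfl, rfl⟩ := exists_eq_append_letter_cons (w := w) (i := i)
      (by simpa [letters] using h)
    exact ⟨Label.letter b :: u, a, v, rfl, by simp [letters]⟩
  | Label.vopen x :: w, i, h => by
    obtain ⟨u, a, v, rfl, rfl⟩ := exists_eq_append_letter_cons (w := w) (i := i)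
      (by simpa [letters] using h)
    exact ⟨Label.vopen x :: u, a, v, rfl, by simp [letters]⟩
  | Label.vclose x :: w, i, h => by
    obtain ⟨u, a, v, rfl, rfl⟩ := exists_eq_append_letter_cons (w := w) (i := i)
      (by simpa [letters] using h)
    exact ⟨Label.vclose x :: u, a, v, rfl, by simp [letters]⟩

variable [DecidableEq α] [DecidableEq V]

theorem mem_iff_length_letters_take_idxOf_le {u v : List (Label α V)} {a : α}
    {l : Label α V} (hl : l ≠ Label.letter a) :
    l ∈ u ↔ (letters ((u ++ Label.letter a :: v).take
      ((u ++ Label.letter a :: v).idxOf l))).length ≤ (letters u).length := by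
  by_cases hu : l ∈ u
  · rw [List.idxOf_append_of_mem hu, List.take_append_of_le_length
      (List.idxOf_lt_length_of_mem hu).le]
    simpa [hu] using length_letters_take_le u _
  · rw [List.idxOf_append_of_notMem hu, List.idxOf_cons_ne _ hl.symm, List.take_append,
      List.take_of_length_le (by omega), Nat.add_sub_cancel_left, List.take_succ_cons]
    simp [hu, letters]

theorem refMapping_eq_none_iff {w : List (Label α V)} {x : V} :
    refMapping w x = none ↔ Label.vopen x ∉ w := by
  simp [refMapping]

theorem refMapping_eq_some {w : List (Label α V)} {x : V} {s : Span}
    (h : refMapping w x = some s) :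
    Label.vopen x ∈ w ∧ s = ((letters (w.take (w.idxOf (Label.vopen x)))).length,
      (letters (w.take (w.idxOf (Label.vclose x)))).length) := by
  unfold refMapping at h
  split_ifs at h with hx
  exact ⟨hx, (Option.some.inj h).symm⟩

theorem refMapping_snd_le {w : List (Label α V)} {x : V} {s : Span}
    (h : refMapping w x = some s) : s.2 ≤ (letters w).length := by
  rw [(refMapping_eq_some h).2]
  exact length_letters_take_le w _

theorem ValidRef.vclose_mem_iff {w : List (Label α V)} (hw : ValidRef w) (x : V) :
    Label.vclose x ∈ w ↔ Label.vopen x ∈ w := by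
  rcases hw x with ⟨ho, hc⟩ | ⟨ho, hc, -⟩
  · exact iff_of_false hc ho
  · exact iff_of_true (List.count_pos_iff.1 (by omega)) (List.count_pos_iff.1 (by omega))

end Letters

namespace VA

variable {α V Q : Type} [DecidableEq α] [DecidableEq V] {A : VA α V Q}

def StateBeforeLetter (A : VA α V Q) (d : List α) (m : Mapping V) (i : ℕ) (q : Q) : Prop :=
  ∃ u a v, (letters u).length = i ∧ letters (u ++ Label.letter a :: v) = d ∧
    refMapping (u ++ Label.letter a :: v) = m ∧
    A.Path A.init u q ∧ ∃ qf ∈ A.final, A.Path q (Label.letter a :: v) qf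

theorem exists_stateBeforeLetter {d : List α} {m : Mapping V} (hm : m ∈ A.spanner d)
    {i : ℕ} (hi : i < d.length) : ∃ q, A.StateBeforeLetter d m i q := by
  obtain ⟨w, ⟨qf, hqf, hw⟩, rfl, rfl⟩ := hm
  obtain ⟨u, a, v, rfl, hu⟩ := exists_eq_append_letter_cons hi
  obtain ⟨q, hpu, hpv⟩ := hw.exists_of_append
  exact ⟨q, u, a, v, hu, rfl, rfl, hpu, qf, hqf, hpv⟩

/-- A run that has opened `x` but not yet closed it cannot be continued by the remainder of an
accepting run that never opens `x`: the spliced run would be accepting but not valid. -/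
theorem Sequential.ne_none_of_stateBeforeLetter (hA : A.Sequential) {d₁ d₂ : List α}
    {m₁ m₂ : Mapping V} {i j : ℕ} {q : Q} (h₁ : A.StateBeforeLetter d₁ m₁ i q)
    (h₂ : A.StateBeforeLetter d₂ m₂ j q) {x : V} {s : Span} (hx : m₁ x = some s)
    (hs₁ : s.1 ≤ i) (hs₂ : i < s.2) : m₂ x ≠ none := by
  obtain ⟨u₁, a₁, v₁, rfl, -, rfl, hu₁, -⟩ := h₁
  obtain ⟨u₂, a₂, v₂, -, -, rfl, hu₂, qf, hqf, hv₂⟩ := h₂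
  obtain ⟨-, rfl⟩ := refMapping_eq_some hx
  intro hnone
  have hopen : Label.vopen x ∈ u₁ :=
    (mem_iff_length_letters_take_idxOf_le (by simp)).2 hs₁
  have hclose : Label.vclose x ∉ u₁ := fun h =>
    (mem_iff_length_letters_take_idxOf_le (by simp)).1 h |>.not_gt hs₂
  have hclose₂ : Label.vclose x ∉ u₂ ++ Label.letter a₂ :: v₂ :=
    ((hA _ ⟨qf, hqf, hu₂.append hv₂⟩).vclose_mem_iff x).not.2 (refMapping_eq_none_iff.1 hnone)
  have hspliced : Label.vclose x ∈ u₁ ++ Label.letter a₂ :: v₂ :=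
    ((hA _ ⟨qf, hqf, hu₁.append hv₂⟩).vclose_mem_iff x).2 (List.mem_append_left _ hopen)
  rcases List.mem_append.1 hspliced with h | h
  · exact hclose h
  · exact hclose₂ (List.mem_append_right _ h)

end VA

section ExtendsWithin

variable {V : Type} {S : Span → Prop} {m m₁ m₂ m₃ : Mapping V}

/-- A transitive stand-in for variable-wise domination under a variable inclusion-like rule, `S`
holding of the right-hand sides of strict domination pairs. -/
def ExtendsWithin (S : Span → Prop) (m m' : Mapping V) : Prop :=
  ∀ x, m x = m' x ∨ m x = none ∧ ∃ s, S s ∧ m' x = some s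

theorem ExtendsWithin.refl (S : Span → Prop) (m : Mapping V) : ExtendsWithin S m m :=
  fun _ => .inl rfl

theorem ExtendsWithin.trans (h₁₂ : ExtendsWithin S m₁ m₂) (h₂₃ : ExtendsWithin S m₂ m₃) :
    ExtendsWithin S m₁ m₃ := by
  intro x
  rcases h₁₂ x with h | ⟨h, s, hs, hs₂⟩
  · exact h ▸ h₂₃ x
  · rcases h₂₃ x with h' | ⟨h', -⟩
    · exact .inr ⟨h, s, hs, h' ▸ hs₂⟩
    · simp [hs₂] at h'

theorem ExtendsWithin.dom_subset (h : ExtendsWithin S m₁ m₂) :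
    {x | m₁ x ≠ none} ⊆ {x | m₂ x ≠ none} := by
  intro x hx
  rcases h x with h | ⟨h, -⟩
  exacts [by simpa [← h] using hx, absurd h hx]

theorem ExtendsWithin.eq_of_dom_subset (h : ExtendsWithin S m₁ m₂)
    (hdom : {x | m₂ x ≠ none} ⊆ {x | m₁ x ≠ none}) : m₁ = m₂ := by
  funext x
  rcases h x with h | ⟨h, s, -, hs⟩
  · exact h
  · exact absurd h (hdom (by simp [hs]))

theorem ExtendsWithin.exists_of_ne (h₁ : ExtendsWithin S m₁ m) (h₂ : ExtendsWithin S m₂ m)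
    {x : V} (hne : m₁ x ≠ m₂ x) :
    ∃ s, S s ∧ (m₁ x = some s ∧ m₂ x = none ∨ m₁ x = none ∧ m₂ x = some s) := by
  rcases h₁ x with h₁ | ⟨h₁, s, hs, hsm⟩ <;> rcases h₂ x with h₂ | ⟨h₂, s', hs', hsm'⟩
  · exact absurd (h₁.trans h₂.symm) hne
  · exact ⟨s', hs', .inl ⟨h₁.trans hsm', h₂⟩⟩
  · exact ⟨s, hs, .inr ⟨h₁, h₂.trans hsm⟩⟩
  · exact absurd (h₁.trans h₂.symm) hne

theorem extendsWithin_of_forall_dom {D : Option Span → Option Span → Prop}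
    (hD : ∀ v₁ v₂, D v₁ v₂ → v₁ ≠ v₂ → v₁ = none) (h : ∀ x, D (m₁ x) (m₂ x)) :
    ExtendsWithin (fun s => D none (some s)) m₁ m₂ := by
  intro x
  by_cases hx : m₁ x = m₂ x
  · exact .inl hx
  · have hnone := hD _ _ (h x) hx
    obtain ⟨s, hs⟩ := Option.ne_none_iff_exists'.1 (Ne.symm (hnone ▸ hx))
    have hD := h x
    rw [hnone, hs] at hD
    exact .inr ⟨hnone, s, hD, hs⟩

theorem exists_mem_skyline_extendsWithin {α V : Type} {P : Spanner α V}
    {D : List α → Option Span → Option Span → Prop} {d : List α}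
    (hD : ∀ v₁ v₂, D d v₁ v₂ → v₁ ≠ v₂ → v₁ = none) (hfin : (P d).Finite)
    {m : Mapping V} (hm : m ∈ P d) :
    ∃ m' ∈ skyline P (fun d' m₁ m₂ => ∀ x, D d' (m₁ x) (m₂ x)) d,
      ExtendsWithin (fun s => D d none (some s)) m m' := by
  obtain ⟨m', ⟨hm', hmm'⟩, hmax⟩ := (hfin.subset fun _ h => h.1).exists_maximalFor
    (fun m' : Mapping V => {x | m' x ≠ none}) {m' | m' ∈ P d ∧ ExtendsWithin _ m m'}
    ⟨m, hm, .refl _ m⟩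
  refine ⟨m', ⟨hm', fun m'' hm'' hne hdom => hne ?_⟩, hmm'⟩
  have h := extendsWithin_of_forall_dom hD hdom
  exact (h.eq_of_dom_subset (hmax ⟨hm'', hmm'.trans h⟩ h.dom_subset)).symm

end ExtendsWithin

namespace VA

variable {α V Q : Type} [DecidableEq α] [DecidableEq V] {A : VA α V Q}

theorem snd_le_length_of_mem_spanner {d : List α} {m : Mapping V} (hm : m ∈ A.spanner d)
    {x : V} {s : Span} (hx : m x = some s) : s.2 ≤ d.length := by
  obtain ⟨w, -, rfl, rfl⟩ := hm
  exact refMapping_snd_le hx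

theorem Sequential.eq_of_extendsWithin (hA : A.Sequential) {S : Span → Prop} {H : Set ℕ}
    (hH : ∀ s, S s → ∃ i ∈ H, s.1 ≤ i ∧ i < s.2) {d : List α} {m m₁ m₂ : Mapping V}
    (hm₁ : m₁ ∈ A.spanner d) (hm₂ : m₂ ∈ A.spanner d)
    (h₁ : ExtendsWithin S m₁ m) (h₂ : ExtendsWithin S m₂ m)
    (hq : ∀ i ∈ H, i < d.length →
      ∃ q, A.StateBeforeLetter d m₁ i q ∧ A.StateBeforeLetter d m₂ i q) :
    m₁ = m₂ := by
  funext x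
  by_contra hne
  obtain ⟨s, hs, hx⟩ := h₁.exists_of_ne h₂ hne
  obtain ⟨i, hiH, hs₁, hs₂⟩ := hH s hs
  rcases hx with ⟨hx₁, hx₂⟩ | ⟨hx₁, hx₂⟩
  · obtain ⟨q, hq₁, hq₂⟩ := hq i hiH (hs₂.trans_le (snd_le_length_of_mem_spanner hm₁ hx₁))
    exact hA.ne_none_of_stateBeforeLetter hq₁ hq₂ hx₁ hs₁ hs₂ hx₂
  · obtain ⟨q, hq₁, hq₂⟩ := hq i hiH (hs₂.trans_le (snd_le_length_of_mem_spanner hm₂ hx₂))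
    exact hA.ne_none_of_stateBeforeLetter hq₂ hq₁ hx₂ hs₁ hs₂ hx₁

end VA

theorem skyline_size_bound_hitting_set_general {α V Q : Type} [DecidableEq α]
    [DecidableEq V] [Fintype Q]
    (D : List α → Option Span → Option Span → Prop)
    (hvil : ∀ d v1 v2, D d v1 v2 → v1 ≠ v2 → v1 = none)
    (k : ℕ)
    (hhs : ∀ d : List α, ∃ H : Finset ℕ, H.card ≤ k ∧
        ∀ s : Span, D d none (some s) → ∃ i ∈ H, s.1 ≤ i ∧ i + 1 ≤ s.2)
    (A : VA α V Q) (hseq : A.Sequential) (d : List α) :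
    (A.spanner d).ncard ≤
      Fintype.card Q ^ k *
        (skyline A.spanner (fun d' m1 m2 => ∀ x : V, D d' (m1 x) (m2 x)) d).ncard := by
  set Sky := skyline A.spanner (fun d' m1 m2 => ∀ x : V, D d' (m1 x) (m2 x)) d
  obtain hinf | hfin := (A.spanner d).infinite_or_finite
  · simp [hinf.ncard]
  obtain ⟨H, hHk, hH⟩ := hhs d
  have : Nonempty Q := ⟨A.init⟩
  choose! top htop using fun m (hm : m ∈ A.spanner d) =>
    exists_mem_skyline_extendsWithin (hvil d) hfin hm
  choose! cut hcut using fun m (hm : m ∈ A.spanner d) i (hi : i < d.length) =>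
    VA.exists_stateBeforeLetter hm hi
  have hinj : Set.InjOn (fun m => (top m, fun i : H => cut m i)) (A.spanner d) := by
    intro m₁ hm₁ m₂ hm₂ he
    obtain ⟨htop_eq, hcut_eq⟩ := Prod.mk.inj he
    refine hseq.eq_of_extendsWithin hH hm₁ hm₂ (htop m₁ hm₁).2 (htop_eq ▸ (htop m₂ hm₂).2)
      fun i hi hid => ⟨cut m₁ i, hcut m₁ hm₁ i hid, congrFun hcut_eq ⟨i, hi⟩ ▸ hcut m₂ hm₂ i hid⟩
  calc (A.spanner d).ncard ≤ (Sky ×ˢ (Set.univ : Set (H → Q))).ncard :=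
        Set.ncard_le_ncard_of_injOn _ (fun m hm => ⟨(htop m hm).1, trivial⟩) hinj
          ((hfin.subset fun _ h => h.1).prod Set.finite_univ)
    _ = Fintype.card Q ^ H.card * Sky.ncard := by simp [Set.ncard_prod, mul_comm]
    _ ≤ Fintype.card Q ^ k * Sky.ncard := by
        gcongr
        exact Fintype.card_pos

/-- Let `D` be a single-variable domination rule (a family, for each
document, of partial orders on span-or-undefined values, `none` standing for `−`) that
is variable inclusion-like (every strict pair has `−` as left-hand side), whose strict
pairs never have an empty span as right-hand side, and whose hitting set number is at
most `k`. Then for the variable-wise skyline of the spanner of a sequential VA `A` with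
state set `Q`: `|P_A(d)| ≤ |Q|^k · |(η_D P_A)(d)|` for every document `d`. -/
theorem skyline_size_bound_hitting_set {α V Q : Type} [Fintype α] [DecidableEq α]
    [DecidableEq V] [Fintype Q]
    (D : List α → Option Span → Option Span → Prop)
    (hrefl : ∀ (d : List α) (v : Option Span), (∀ s, v = some s → IsSpanOf d s) → D d v v)
    (htrans : ∀ d v1 v2 v3, D d v1 v2 → D d v2 v3 → D d v1 v3)
    (hanti : ∀ d v1 v2, D d v1 v2 → D d v2 v1 → v1 = v2)
    (hvil : ∀ d v1 v2, D d v1 v2 → v1 ≠ v2 → v1 = none)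
    (hnonempty : ∀ (d : List α) (s : Span), D d none (some s) → s.1 < s.2)
    (k : ℕ)
    (hhs : ∀ d : List α, ∃ H : Finset ℕ, H.card ≤ k ∧
        ∀ s : Span, D d none (some s) → ∃ i ∈ H, s.1 ≤ i ∧ i + 1 ≤ s.2)
    (A : VA α V Q) (hseq : A.Sequential) (d : List α) :
    (A.spanner d).ncard ≤
      Fintype.card Q ^ k *
        (skyline A.spanner (fun d' m1 m2 => ∀ x : V, D d' (m1 x) (m2 x)) d).ncard :=
  skyline_size_bound_hitting_set_general D hvil k hhs A hseq d

end DocSpanners
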